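/- arXiv:1410.3923 — 2 statements merged into one kernel-verified Lean document; each statement's English description precedes it below -/
import Mathlib

section
/- Let 𝕋 = (ℝ/Lℤ)^d be the d-dimensional torus of side length L > 0 with its Haar measure, let W : 𝕋 → ℝ be bounded and measurable with w := ∫_𝕋 W dx, let μ ∈ ℝ, κ ∈ (0, 1/2), θ♯ > 0 with m₀/κ < θ♯, and let m₀ > 0 satisfy m₀ = e^{μ − w·m₀}. Assume that for every R ∈ L²(𝕋), ∫_{𝕋×𝕋} W(x−y) R(x) R(y) dx dy ≥ −(1/θ♯)·∫_𝕋 R² dx. Then the constant density m₀ is the unique minimizer of G_μ over B_κ: if N is measurable with κ·m₀ ≤ N(x) ≤ m₀/κ for all x and G_μ(N) ≤ G_μ(m₀), then N = m₀ almost everywhere. -/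
open MeasureTheory

/-! Write `N = m₀ + R`. By translation invariance of the torus the interaction energy of `N` is
that of `R` plus `2 m₀ w ∫ R` plus a constant, and the Kirkwood–Monroe relation
`log m₀ − μ = −w m₀` cancels this linear term against the linear term of the tangent-line
expansion of the entropy at `m₀`. Since `t ↦ t log t` is `κ/m₀`-strongly convex on `(0, m₀/κ]`,
the lower bound on the quadratic form of `W` leaves
`G_μ(N) − G_μ(m₀) ≥ (κ/m₀ − 1/θ♯) ∫ R² / 2`, so `G_μ(N) ≤ G_μ(m₀)` forces `R = 0`. -/

/-- The grand canonical free energy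
G_μ(N) = ∫ (N log N − (1+μ) N) dx + (1/2) ∫∫ W(x−y) N(x) N(y) dx dy
on the d-dimensional torus of side length L. -/
noncomputable def Gmu {d : ℕ} {L : ℝ} [Fact (0 < L)]
    (W : (Fin d → AddCircle L) → ℝ) (μ : ℝ) (N : (Fin d → AddCircle L) → ℝ) : ℝ :=
  (∫ x, (N x * Real.log (N x) - (1 + μ) * N x)) +
    (1 / 2) * ∫ x, ∫ y, W (x - y) * N x * N y

theorem log_sub_log_le_sub_div {s m M : ℝ} (hs : 0 < s) (hsm : s ≤ m) (hmM : m ≤ M) :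
    Real.log s - Real.log m ≤ (s - m) / M := by
  have hm : 0 < m := hs.trans_le hsm
  calc Real.log s - Real.log m = Real.log (s / m) := (Real.log_div hs.ne' hm.ne').symm
    _ ≤ s / m - 1 := Real.log_le_sub_one_of_pos (by positivity)
    _ = (s - m) / m := by field_simp
    _ ≤ (s - m) / M := by
      rw [← neg_sub m s, neg_div, neg_div]
      exact neg_le_neg (div_le_div_of_nonneg_left (sub_nonneg.2 hsm) hm hmM)

theorem sub_div_le_log_sub_log {s m M : ℝ} (hm : 0 < m) (hms : m ≤ s) (hsM : s ≤ M) :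
    (s - m) / M ≤ Real.log s - Real.log m := by
  have hs : 0 < s := hm.trans_le hms
  calc (s - m) / M ≤ (s - m) / s := div_le_div_of_nonneg_left (by linarith) hs hsM
    _ = 1 - (s / m)⁻¹ := by field_simp
    _ ≤ Real.log (s / m) := Real.one_sub_inv_le_log_of_pos (by positivity)
    _ = Real.log s - Real.log m := Real.log_div hs.ne' hm.ne'

/-- `t ↦ t log t` is `1/M`-strongly convex on `(0, M]`, since its second derivative is `1/t`. -/
theorem tangent_add_sq_div_le_mul_log {m M t : ℝ} (hm : 0 < m) (ht : 0 < t) (hmM : m ≤ M)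
    (htM : t ≤ M) :
    m * Real.log m + (Real.log m + 1) * (t - m) + (t - m) ^ 2 / (2 * M) ≤ t * Real.log t := by
  set g : ℝ → ℝ := fun s => s * Real.log s - (Real.log m + 1) * s - (s - m) ^ 2 / (2 * M)
  have hM : 0 < M := hm.trans_le hmM
  have hg : ∀ s, 0 < s → HasDerivAt g (Real.log s - Real.log m - (s - m) / M) s := by
    intro s hs
    have := ((Real.hasDerivAt_mul_log hs.ne').fun_sub
      ((hasDerivAt_id' s).const_mul (Real.log m + 1))).fun_sub
        ((((hasDerivAt_id' s).sub_const m).fun_pow 2).div_const (2 * M))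
    refine this.congr_deriv ?_
    field_simp
    ring
  have hcont : ∀ a b, 0 < a → ContinuousOn g (Set.Icc a b) := fun a b ha s hs =>
    (hg s (ha.trans_le hs.1)).continuousAt.continuousWithinAt
  have hdiff : ∀ a b, 0 < a → DifferentiableOn ℝ g (interior (Set.Icc a b)) := fun a b ha s hs =>
    (hg s (ha.trans_le (interior_subset hs).1)).differentiableAt.differentiableWithinAt
  have hgm : g m ≤ g t := by
    rcases le_total t m with htm | hmt
    · refine antitoneOn_of_deriv_nonpos (convex_Icc t m) (hcont t m ht) (hdiff t m ht) ?_
        ⟨le_rfl, htm⟩ ⟨htm, le_rfl⟩ htm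
      intro s hs
      rw [interior_Icc] at hs
      rw [(hg s (ht.trans hs.1)).deriv, sub_nonpos]
      exact log_sub_log_le_sub_div (ht.trans hs.1) hs.2.le hmM
    · refine monotoneOn_of_deriv_nonneg (convex_Icc m t) (hcont m t hm) (hdiff m t hm) ?_
        ⟨le_rfl, hmt⟩ ⟨hmt, le_rfl⟩ hmt
      intro s hs
      rw [interior_Icc] at hs
      rw [(hg s (hm.trans hs.1)).deriv, sub_nonneg]
      exact sub_div_le_log_sub_log hm hs.1.le (hs.2.le.trans htM)
  simp only [g, sub_self, zero_pow two_ne_zero, zero_div, sub_zero] at hgm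
  linarith

theorem Continuous.integrable_comp_of_mem_Icc {α : Type*} [MeasurableSpace α] {ν : Measure α}
    [IsFiniteMeasure ν] {f : ℝ → ℝ} (hf : Continuous f) {N : α → ℝ} (hN : Measurable N)
    {a b : ℝ} (hNab : ∀ x, N x ∈ Set.Icc a b) : Integrable (fun x => f (N x)) ν := by
  obtain ⟨C, hC⟩ := isCompact_Icc.exists_bound_of_continuousOn hf.continuousOn
  exact .of_bound (hf.measurable.comp hN).aestronglyMeasurable C
    (ae_of_all _ fun x => hC _ (hNab x))

section PairEnergy

variable {G : Type*} [AddCommGroup G] [MeasurableSpace G]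

noncomputable def pairEnergy (ν : Measure G) (W R : G → ℝ) : ℝ :=
  ∫ x, ∫ y, W (x - y) * R x * R y ∂ν ∂ν

variable [MeasurableAdd₂ G] [MeasurableNeg G] {ν : Measure G} [IsFiniteMeasure ν]

theorem integrable_prod_sub_mul {W R : G → ℝ} (hW : Measurable W) {C : ℝ}
    (hWC : ∀ z, |W z| ≤ C) (hR : Integrable R ν) :
    Integrable (fun p : G × G => W (p.1 - p.2) * R p.2) (ν.prod ν) :=
  (hR.comp_snd ν).bdd_mul (hW.comp measurable_sub).aestronglyMeasurable
    (ae_of_all _ fun _ => hWC _)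

variable [ν.IsAddLeftInvariant]

theorem integral_integral_sub_mul {W R : G → ℝ} (hW : Measurable W) {C : ℝ}
    (hWC : ∀ z, |W z| ≤ C) (hR : Integrable R ν) :
    ∫ x, ∫ y, W (x - y) * R y ∂ν ∂ν = (∫ z, W z ∂ν) * ∫ x, R x ∂ν := by
  rw [integral_integral_swap (integrable_prod_sub_mul hW hWC hR), ← integral_const_mul]
  simp_rw [integral_mul_const, integral_sub_right_eq_self]

variable [ν.IsNegInvariant]

theorem pairEnergy_add_const {W R : G → ℝ} (hW : Measurable W) {C : ℝ} (hWC : ∀ z, |W z| ≤ C)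
    (hR : Measurable R) {CR : ℝ} (hRC : ∀ x, |R x| ≤ CR) (c : ℝ) :
    pairEnergy ν W (fun x => R x + c) = pairEnergy ν W R +
      2 * c * (∫ z, W z ∂ν) * (∫ x, R x ∂ν) + c ^ 2 * (∫ z, W z ∂ν) * ν.real Set.univ := by
  set w := ∫ z, W z ∂ν
  set K : G → ℝ := fun x => ∫ y, W (x - y) * R y ∂ν
  have hRi : Integrable R ν := .of_bound hR.aestronglyMeasurable CR (ae_of_all _ hRC)
  have hWx (x : G) : Integrable (fun y => W (x - y)) ν :=
    .of_bound (hW.comp (measurable_const.sub measurable_id)).aestronglyMeasurable C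
      (ae_of_all _ fun _ => hWC _)
  have hWRx (x : G) : Integrable (fun y => W (x - y) * R y) ν :=
    hRi.bdd_mul (hWx x).aestronglyMeasurable (ae_of_all _ fun _ => hWC _)
  have hK : Integrable K ν := (integrable_prod_sub_mul hW hWC hRi).integral_prod_left
  have hRK : Integrable (fun x => R x * K x) ν :=
    hK.bdd_mul hR.aestronglyMeasurable (ae_of_all _ hRC)
  have hinner (x : G) :
      ∫ y, W (x - y) * (R x + c) * (R y + c) ∂ν = (R x + c) * (K x + c * w) := by
    calc ∫ y, W (x - y) * (R x + c) * (R y + c) ∂ν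
        = ∫ y, (R x + c) * (W (x - y) * R y + c * W (x - y)) ∂ν := by congr with y; ring
      _ = (R x + c) * (K x + c * w) := by
        rw [integral_const_mul, integral_add (hWRx x) ((hWx x).const_mul c), integral_const_mul,
          integral_sub_left_eq_self]
  have hpairR : pairEnergy ν W R = ∫ x, R x * K x ∂ν := by
    unfold pairEnergy
    congr with x
    rw [← integral_const_mul]
    congr with y
    ring
  calc pairEnergy ν W (fun x => R x + c)
      = ∫ x, (R x * K x + c * w * R x + c * K x + c ^ 2 * w) ∂ν := by
        simp only [pairEnergy, hinner]
        congr with x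
        ring
    _ = _ := by
        rw [integral_add, integral_add, integral_add, integral_const_mul, integral_const_mul,
          integral_integral_sub_mul hW hWC hRi, integral_const, ← hpairR, smul_eq_mul]
        · ring
        exacts [hRK, hRi.const_mul _, hRK.add (hRi.const_mul _), hK.const_mul c,
          (hRK.add (hRi.const_mul _)).add (hK.const_mul c), integrable_const _]

end PairEnergy

theorem integral_entropy_sub_const_ge {α : Type*} [MeasurableSpace α] {ν : Measure α}
    [IsFiniteMeasure ν] {N : α → ℝ} (hN : Measurable N) {μ m M : ℝ} (hm : 0 < m) (hmM : m ≤ M)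
    (hNpos : ∀ x, 0 < N x) (hNM : ∀ x, N x ≤ M) :
    (Real.log m - μ) * ∫ x, (N x - m) ∂ν + (∫ x, (N x - m) ^ 2 ∂ν) / (2 * M) ≤
      ∫ x, (N x * Real.log (N x) - (1 + μ) * N x) ∂ν -
        ∫ _x, (m * Real.log m - (1 + μ) * m) ∂ν := by
  have hNI (x : α) : N x ∈ Set.Icc 0 M := ⟨(hNpos x).le, hNM x⟩
  have hint {f : ℝ → ℝ} (hf : Continuous f) : Integrable (fun x => f (N x)) ν :=
    hf.integrable_comp_of_mem_Icc hN hNI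
  have hlin := hint (f := fun t => t - m) (by fun_prop)
  have hsq := hint (f := fun t => (t - m) ^ 2) (by fun_prop)
  have hent := hint (f := fun t => t * Real.log t - (1 + μ) * t)
    (Real.continuous_mul_log.sub (by fun_prop))
  rw [← integral_const_mul, ← integral_div, ← integral_add (hlin.const_mul _) (hsq.div_const _),
    ← integral_sub hent (integrable_const _)]
  refine integral_mono ((hlin.const_mul _).add (hsq.div_const _)) (hent.sub (integrable_const _))
    fun x => ?_
  have := tangent_add_sq_div_le_mul_log hm (hNpos x) hmM (hNM x)
  dsimp only
  linarith

theorem ae_eq_const_of_integral_sq_sub_nonpos {α : Type*} [MeasurableSpace α] {ν : Measure α}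
    {N : α → ℝ} {m : ℝ} (hN : Integrable (fun x => (N x - m) ^ 2) ν)
    (h : ∫ x, (N x - m) ^ 2 ∂ν ≤ 0) : N =ᵐ[ν] fun _ => m := by
  have hsq := (integral_eq_zero_iff_of_nonneg (fun x => sq_nonneg (N x - m)) hN).1
    (le_antisymm h (integral_nonneg fun x => sq_nonneg _))
  filter_upwards [hsq] with x hx
  simpa [sub_eq_zero] using hx

theorem Gmu_sub_Gmu_const_ge {d : ℕ} {L : ℝ} [Fact (0 < L)] {W : (Fin d → AddCircle L) → ℝ}
    (hW : Measurable W) {C : ℝ} (hWC : ∀ z, |W z| ≤ C) {μ m M : ℝ} (hm : 0 < m) (hmM : m ≤ M)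
    (hKM : m = Real.exp (μ - (∫ x, W x) * m)) {N : (Fin d → AddCircle L) → ℝ}
    (hN : Measurable N) (hNpos : ∀ x, 0 < N x) (hNM : ∀ x, N x ≤ M) :
    (∫ x, (N x - m) ^ 2) / (2 * M) + pairEnergy volume W (fun x => N x - m) / 2 ≤
      Gmu W μ N - Gmu W μ (fun _ => m) := by
  have := Measure.IsAddHaarMeasure.isNegInvariant_of_regular
    (volume : Measure (Fin d → AddCircle L))
  have hlog : Real.log m - μ = -(∫ x, W x) * m := by
    have := congrArg Real.log hKM
    rw [Real.log_exp] at this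
    linarith
  have hpair := pairEnergy_add_const (ν := volume) hW hWC (hN.sub_const m)
    (fun x => abs_sub_le_of_nonneg_of_le (hNpos x).le (hNM x) hm.le hmM) m
  have hpair_const := pairEnergy_add_const (ν := volume) hW hWC (R := fun _ => 0)
    measurable_const (fun _ => abs_zero.trans_le (hm.le.trans hmM)) m
  have hpair_zero : pairEnergy volume W (fun _ => 0) = 0 := by simp [pairEnergy]
  have hent := integral_entropy_sub_const_ge (ν := volume) (μ := μ) hN hm hmM hNpos hNM
  simp only [sub_add_cancel, zero_add, integral_zero, hpair_zero] at hpair hpair_const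
  change _ ≤ (_ + 1 / 2 * pairEnergy volume W N) -
    ((∫ _x : Fin d → AddCircle L, (m * Real.log m - (1 + μ) * m)) +
      1 / 2 * pairEnergy volume W fun _ => m)
  rw [hpair, hpair_const]
  rw [hlog] at hent
  linarith

theorem uniform_state_unique_minimizer_general (d : ℕ) (L : ℝ) [Fact (0 < L)]
    (W : (Fin d → AddCircle L) → ℝ) (hWmeas : Measurable W)
    (hWbdd : ∃ C : ℝ, ∀ z, |W z| ≤ C)
    (μ κ θ m₀ : ℝ) (hκ : κ ∈ Set.Ioo (0 : ℝ) (1 / 2)) (hm₀ : 0 < m₀)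
    (hmκθ : m₀ / κ < θ)
    (hKM : m₀ = Real.exp (μ - (∫ x, W x) * m₀))
    (hW : ∀ R : (Fin d → AddCircle L) → ℝ, MemLp R 2 volume →
      (∫ x, ∫ y, W (x - y) * R x * R y) ≥ -(1 / θ) * ∫ x, (R x) ^ 2)
    (N : (Fin d → AddCircle L) → ℝ) (hNmeas : Measurable N)
    (hNbd : ∀ x, κ * m₀ ≤ N x ∧ N x ≤ m₀ / κ)
    (hmin : Gmu W μ N ≤ Gmu W μ (fun _ => m₀)) :
    N =ᵐ[volume] (fun _ => m₀) := by
  obtain ⟨C, hC⟩ := hWbdd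
  obtain ⟨hκ0, hκ2⟩ := hκ
  set M := m₀ / κ
  have hm₀M : m₀ ≤ M := le_div_self hm₀.le hκ0 (by linarith)
  have hNpos (x) : 0 < N x := (mul_pos hκ0 hm₀).trans_le (hNbd x).1
  have hR : MemLp (fun x => N x - m₀) 2 volume :=
    .of_bound (hNmeas.sub_const m₀).aestronglyMeasurable M (ae_of_all _ fun x =>
      abs_sub_le_of_nonneg_of_le (hNpos x).le (hNbd x).2 hm₀.le hm₀M)
  have hexpand := Gmu_sub_Gmu_const_ge hWmeas hC hm₀ hm₀M hKM hNmeas hNpos fun x => (hNbd x).2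
  have hform : pairEnergy volume W (fun x => N x - m₀) ≥ -(1 / θ) * ∫ x, (N x - m₀) ^ 2 :=
    hW _ hR
  have hθM : 1 / θ < 1 / M := one_div_lt_one_div_of_lt (by positivity) hmκθ
  set S := ∫ x, (N x - m₀) ^ 2
  have hgap : (1 / M - 1 / θ) * S ≤ 0 := by
    have : S / (2 * M) = 1 / M * S / 2 := by ring
    linarith
  exact ae_eq_const_of_integral_sq_sub_nonpos hR.integrable_sq
    (nonpos_of_mul_nonpos_right hgap (by linarith))

/-- The uniqueness assertion of Proposition 4.2: under the Fourier-type lower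
bound −1/θ♯ on the quadratic form of W with m₀/κ < θ♯ and the Kirkwood–Monroe
relation m₀ = e^{μ − w·m₀}, the constant density m₀ is the unique minimizer of
G_μ over B_κ. -/
theorem uniform_state_unique_minimizer (d : ℕ) (L : ℝ) [Fact (0 < L)]
    (W : (Fin d → AddCircle L) → ℝ) (hWmeas : Measurable W)
    (hWbdd : ∃ C : ℝ, ∀ z, |W z| ≤ C)
    (μ κ θ m₀ : ℝ) (hκ : κ ∈ Set.Ioo (0 : ℝ) (1 / 2)) (hθ : 0 < θ) (hm₀ : 0 < m₀)
    (hmκθ : m₀ / κ < θ)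
    (hKM : m₀ = Real.exp (μ - (∫ x, W x) * m₀))
    (hW : ∀ R : (Fin d → AddCircle L) → ℝ, MemLp R 2 volume →
      (∫ x, ∫ y, W (x - y) * R x * R y) ≥ -(1 / θ) * ∫ x, (R x) ^ 2)
    (N : (Fin d → AddCircle L) → ℝ) (hNmeas : Measurable N)
    (hNbd : ∀ x, κ * m₀ ≤ N x ∧ N x ≤ m₀ / κ)
    (hmin : Gmu W μ N ≤ Gmu W μ (fun _ => m₀)) :
    N =ᵐ[volume] (fun _ => m₀) :=
  uniform_state_unique_minimizer_general d L W hWmeas hWbdd μ κ θ m₀ hκ hm₀ hmκθ hKM hW N hNmeas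
    hNbd hmin
end

section
/- Let d ≥ 1, let a, b : ℤ^d → ℂ satisfy Σ_k |a(k)| < ∞, Σ_k |k|·|b(k)| < ∞ and Σ_k |k|²·|b(k)| < ∞, and let h > 0. Then Σ_{k ∈ ℤ^d} (h/(1 + h|k|²))·|Σ_{q ∈ ℤ^d} ((k−q)·q)·a(k−q)·b(q)| ≤ h·(Σ_k |a(k)|)·(Σ_k |k|²|b(k)|) + (h^{1/2}/2)·(Σ_k |a(k)|)·(Σ_k |k||b(k)|). -/
/-!
Bound the inner product by Cauchy–Schwarz, `|(k - q)·q| ≤ |k||q| + |q|²`, and the weight by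
AM–GM, `h|k| / (1 + h|k|²) ≤ √h / 2` and `h / (1 + h|k|²) ≤ h`. Each term of the double sum is
then dominated by `(√h/2 · |q||b(q)| + h · |q|²|b(q)|) · |a(k - q)|`, a convolution of nonnegative
summable functions, whose total sum is the product of their sums.
-/

noncomputable def znorm {d : ℕ} (k : Fin d → ℤ) : ℝ :=
  Real.sqrt (∑ i, ((k i : ℝ)) ^ 2)

def zdot {d : ℕ} (k q : Fin d → ℤ) : ℝ :=
  ∑ i, (k i : ℝ) * (q i : ℝ)

section Lattice

variable {d : ℕ}

lemma znorm_nonneg (k : Fin d → ℤ) : 0 ≤ znorm k := Real.sqrt_nonneg _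

lemma znorm_neg (k : Fin d → ℤ) : znorm (-k) = znorm k := by
  simp [znorm]

lemma zdot_self (q : Fin d → ℤ) : zdot q q = znorm q ^ 2 := by
  rw [znorm, Real.sq_sqrt (by positivity)]
  simp [zdot, sq]

lemma zdot_sub_left (k l q : Fin d → ℤ) : zdot (k - l) q = zdot k q - zdot l q := by
  simp [zdot, sub_mul, Finset.sum_sub_distrib]

lemma zdot_neg_left (k q : Fin d → ℤ) : zdot (-k) q = -zdot k q := by
  simp [zdot]

lemma zdot_le (k q : Fin d → ℤ) : zdot k q ≤ znorm k * znorm q :=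
  Real.sum_mul_le_sqrt_mul_sqrt _ _ _

lemma abs_zdot_le (k q : Fin d → ℤ) : |zdot k q| ≤ znorm k * znorm q := by
  refine abs_le.mpr ⟨?_, zdot_le k q⟩
  have := zdot_le (-k) q
  rw [zdot_neg_left, znorm_neg] at this
  linarith

lemma abs_zdot_sub_le (k q : Fin d → ℤ) :
    |zdot (k - q) q| ≤ znorm k * znorm q + znorm q ^ 2 := by
  rw [zdot_sub_left, zdot_self]
  calc |zdot k q - znorm q ^ 2| ≤ |zdot k q| + |znorm q ^ 2| := abs_sub _ _
    _ ≤ znorm k * znorm q + znorm q ^ 2 := by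
      rw [abs_of_nonneg (sq_nonneg (znorm q))]
      gcongr
      exact abs_zdot_le k q

end Lattice

lemma mul_div_one_add_mul_sq_le {h : ℝ} (hh : 0 ≤ h) (x : ℝ) :
    h * x / (1 + h * x ^ 2) ≤ Real.sqrt h / 2 := by
  obtain ⟨s, hs, rfl⟩ : ∃ s, 0 ≤ s ∧ h = s ^ 2 := ⟨√h, Real.sqrt_nonneg h, (Real.sq_sqrt hh).symm⟩
  rw [Real.sqrt_sq hs, div_le_div_iff₀ (by positivity) two_pos]
  nlinarith [mul_nonneg hs (sq_nonneg (1 - s * x))]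

lemma div_one_add_mul_sq_mul_le {h x : ℝ} (hh : 0 ≤ h) {y : ℝ} (hy : 0 ≤ y) :
    h / (1 + h * x ^ 2) * (x * y + y ^ 2) ≤ Real.sqrt h / 2 * y + h * y ^ 2 := by
  have hweight : h / (1 + h * x ^ 2) ≤ h :=
    div_le_self hh (le_add_of_nonneg_right (by positivity))
  calc h / (1 + h * x ^ 2) * (x * y + y ^ 2)
      = h * x / (1 + h * x ^ 2) * y + h / (1 + h * x ^ 2) * y ^ 2 := by ring
    _ ≤ Real.sqrt h / 2 * y + h * y ^ 2 :=
      add_le_add (mul_le_mul_of_nonneg_right (mul_div_one_add_mul_sq_le hh x) hy)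
        (mul_le_mul_of_nonneg_right hweight (sq_nonneg y))

lemma weight_mul_norm_zdot_sub_mul_le {d : ℕ} {h : ℝ} (hh : 0 ≤ h) (k q : Fin d → ℤ) (x y : ℂ) :
    h / (1 + h * znorm k ^ 2) * ‖(zdot (k - q) q : ℂ) * x * y‖ ≤
      (Real.sqrt h / 2 * (znorm q * ‖y‖) + h * (znorm q ^ 2 * ‖y‖)) * ‖x‖ := by
  rw [norm_mul, norm_mul, Complex.norm_real, Real.norm_eq_abs]
  calc _ = h / (1 + h * znorm k ^ 2) * |zdot (k - q) q| * (‖x‖ * ‖y‖) := by ring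
    _ ≤ (Real.sqrt h / 2 * znorm q + h * znorm q ^ 2) * (‖x‖ * ‖y‖) := by
        gcongr
        calc _ ≤ h / (1 + h * znorm k ^ 2) * (znorm k * znorm q + znorm q ^ 2) := by
              gcongr; exact abs_zdot_sub_le k q
          _ ≤ _ := div_one_add_mul_sq_mul_le hh (znorm_nonneg q)
    _ = _ := by ring

lemma mul_norm_tsum_le_of_mul_norm_le {ι E : Type*} [SeminormedAddCommGroup E] {c : ℝ}
    (hc : 0 ≤ c) {F : ι → E} {u : ι → ℝ} (hu : Summable u) (hFu : ∀ i, c * ‖F i‖ ≤ u i) :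
    c * ‖∑' i, F i‖ ≤ ∑' i, u i := by
  have hu0 : ∀ i, 0 ≤ u i := fun i => (mul_nonneg hc (norm_nonneg _)).trans (hFu i)
  rcases hc.eq_or_lt with rfl | hc
  · simpa using tsum_nonneg hu0
  have hF : Summable fun i => ‖F i‖ :=
    .of_nonneg_of_le (fun _ => norm_nonneg _)
      (fun i => (le_div_iff₀' hc).mpr (hFu i)) (hu.div_const c)
  calc c * ‖∑' i, F i‖ ≤ c * ∑' i, ‖F i‖ := by gcongr; exact norm_tsum_le_tsum_norm hF
    _ = ∑' i, c * ‖F i‖ := hF.tsum_mul_left c |>.symm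
    _ ≤ ∑' i, u i := (hF.mul_left c).tsum_le_tsum hFu hu

section Convolution

variable {G : Type*} [AddCommGroup G] {f g : G → ℝ}

/-- The shear `(m, q) ↦ (m + q, q)` turns the convolution kernel into a product. -/
def shearEquiv (G : Type*) [AddCommGroup G] : G × G ≃ G × G where
  toFun p := (p.1 + p.2, p.2)
  invFun p := (p.1 - p.2, p.2)
  left_inv p := by simp
  right_inv p := by simp

lemma summable_mul_comp_sub (hf : Summable f) (hg : Summable g) (hf0 : 0 ≤ f) (hg0 : 0 ≤ g) :
    Summable fun p : G × G => g p.2 * f (p.1 - p.2) := by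
  rw [← (shearEquiv G).summable_iff]
  simpa [Function.comp_def, shearEquiv, mul_comm] using hf.mul_of_nonneg hg hf0 hg0

lemma tsum_tsum_mul_comp_sub (hf : Summable f) (hg : Summable g) (hf0 : 0 ≤ f) (hg0 : 0 ≤ g) :
    ∑' k, ∑' q, g q * f (k - q) = (∑' k, f k) * ∑' q, g q := by
  have hprod := hf.mul_of_nonneg hg hf0 hg0
  rw [← (summable_mul_comp_sub hf hg hf0 hg0).tsum_prod, ← (shearEquiv G).tsum_eq,
    hf.tsum_mul_tsum hg hprod]
  simp [shearEquiv, mul_comm]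

end Convolution

theorem eq_BBBB_estimate_general (d : ℕ) (a b : (Fin d → ℤ) → ℂ)
    (h : ℝ) (hh : 0 < h)
    (ha0 : Summable fun k => ‖a k‖)
    (hb1 : Summable fun k => znorm k * ‖b k‖)
    (hb2 : Summable fun k => znorm k ^ 2 * ‖b k‖) :
    (∑' k : Fin d → ℤ, (h / (1 + h * znorm k ^ 2)) *
        ‖∑' q : Fin d → ℤ, (zdot (k - q) q : ℂ) * a (k - q) * b q‖) ≤
      h * (∑' k : Fin d → ℤ, ‖a k‖) *
          (∑' k : Fin d → ℤ, znorm k ^ 2 * ‖b k‖) +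
        (Real.sqrt h / 2) * (∑' k : Fin d → ℤ, ‖a k‖) *
          (∑' k : Fin d → ℤ, znorm k * ‖b k‖) := by
  set B : (Fin d → ℤ) → ℝ := fun q =>
    Real.sqrt h / 2 * (znorm q * ‖b q‖) + h * (znorm q ^ 2 * ‖b q‖)
  have hB : Summable B := (hb1.mul_left _).add (hb2.mul_left _)
  have hB_nonneg : 0 ≤ B := fun q => add_nonneg
    (mul_nonneg (by positivity) (mul_nonneg (znorm_nonneg q) (norm_nonneg _)))
    (mul_nonneg hh.le (by positivity))
  have ha_nonneg : 0 ≤ fun k => ‖a k‖ := fun k => norm_nonneg (a k)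
  have hkernel := summable_mul_comp_sub ha0 hB ha_nonneg hB_nonneg
  have hterm : ∀ k, h / (1 + h * znorm k ^ 2) *
      ‖∑' q, (zdot (k - q) q : ℂ) * a (k - q) * b q‖ ≤ ∑' q, B q * ‖a (k - q)‖ := fun k =>
    mul_norm_tsum_le_of_mul_norm_le (by positivity) (hkernel.prod_factor k)
      fun q => weight_mul_norm_zdot_sub_mul_le hh.le k q _ _
  calc _ ≤ ∑' k, ∑' q, B q * ‖a (k - q)‖ :=
        (Summable.of_nonneg_of_le (fun k => by positivity) hterm hkernel.prod).tsum_le_tsum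
          hterm hkernel.prod
    _ = (∑' k, ‖a k‖) * ∑' q, B q := tsum_tsum_mul_comp_sub ha0 hB ha_nonneg hB_nonneg
    _ = _ := by
      rw [(hb1.mul_left _).tsum_add (hb2.mul_left _), tsum_mul_left, tsum_mul_left]
      ring

/-- The estimate of Eq. (BBBB) in the proof of Proposition A.1 (Appendix A):
Σ_k (h/(1+h|k|²))·|Σ_q ((k−q)·q) a(k−q) b(q)|
  ≤ h‖a‖_{D₀}‖b‖_{D₂} + (√h/2)‖a‖_{D₀}‖b‖_{D₁},
from |(k−q)·q| ≤ |k||q| + |q|² and h|k|/(1+h|k|²) ≤ √h/2. -/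
theorem eq_BBBB_estimate (d : ℕ) (hd : 1 ≤ d) (a b : (Fin d → ℤ) → ℂ)
    (h : ℝ) (hh : 0 < h)
    (ha0 : Summable fun k => ‖a k‖)
    (hb1 : Summable fun k => znorm k * ‖b k‖)
    (hb2 : Summable fun k => znorm k ^ 2 * ‖b k‖) :
    (∑' k : Fin d → ℤ, (h / (1 + h * znorm k ^ 2)) *
        ‖∑' q : Fin d → ℤ, (zdot (k - q) q : ℂ) * a (k - q) * b q‖) ≤
      h * (∑' k : Fin d → ℤ, ‖a k‖) *
          (∑' k : Fin d → ℤ, znorm k ^ 2 * ‖b k‖) +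
        (Real.sqrt h / 2) * (∑' k : Fin d → ℤ, ‖a k‖) *
          (∑' k : Fin d → ℤ, znorm k * ‖b k‖) :=
  eq_BBBB_estimate_general d a b h hh ha0 hb1 hb2
end
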